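/- For any nonzero vectors k, ξ ∈ ℝ³ and v ∈ ℂ³, one has |(v·ξ)ξ/|ξ|² + (v·ξ)k/|k|²| ≤ |v||ξ+k|/|k|. -/

import Mathlib

open scoped BigOperators

noncomputable section

/-- The ℝ³ vector `ξ` viewed as a vector in ℂ³. -/
def toC3 (ξ : EuclideanSpace ℝ (Fin 3)) : EuclideanSpace ℂ (Fin 3) :=
  WithLp.toLp 2 (fun j => (ξ j : ℂ))

/-- Bilinear (non-Hermitian) dot product of `v ∈ ℂ³` with `ξ ∈ ℝ³`. -/
def dotRC (v : EuclideanSpace ℂ (Fin 3)) (ξ : EuclideanSpace ℝ (Fin 3)) : ℂ :=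
  ∑ j, v j * (ξ j : ℂ)

lemma norm_toC3 (ξ : EuclideanSpace ℝ (Fin 3)) : ‖toC3 ξ‖ = ‖ξ‖ := by
  simp [EuclideanSpace.norm_eq, toC3]

lemma toC3_add (a b : EuclideanSpace ℝ (Fin 3)) : toC3 (a + b) = toC3 a + toC3 b := by
  ext j
  simp [toC3]

lemma toC3_smul (r : ℝ) (a : EuclideanSpace ℝ (Fin 3)) :
    (r : ℂ) • toC3 a = toC3 (r • a) := by
  ext j
  simp [toC3]

lemma dotRC_eq_inner (v : EuclideanSpace ℂ (Fin 3)) (ξ : EuclideanSpace ℝ (Fin 3)) :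
    dotRC v ξ = @inner ℂ _ _ (toC3 ξ) v := by
  simp [dotRC, PiLp.inner_apply, toC3, mul_comm]

lemma norm_dotRC_le (v : EuclideanSpace ℂ (Fin 3)) (ξ : EuclideanSpace ℝ (Fin 3)) :
    ‖dotRC v ξ‖ ≤ ‖ξ‖ * ‖v‖ := by
  rw [dotRC_eq_inner]
  calc ‖@inner ℂ _ _ (toC3 ξ) v‖ ≤ ‖toC3 ξ‖ * ‖v‖ := norm_inner_le_norm _ _
    _ = ‖ξ‖ * ‖v‖ := by rw [norm_toC3]

lemma norm_u (k ξ : EuclideanSpace ℝ (Fin 3)) (hk : k ≠ 0) (hξ : ξ ≠ 0) :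
    ‖(‖ξ‖ ^ 2)⁻¹ • ξ + (‖k‖ ^ 2)⁻¹ • k‖ = ‖ξ + k‖ / (‖ξ‖ * ‖k‖) := by
  have hk' : (0:ℝ) < ‖k‖ := norm_pos_iff.2 hk
  have hξ' : (0:ℝ) < ‖ξ‖ := norm_pos_iff.2 hξ
  have hsq : ‖(‖ξ‖ ^ 2)⁻¹ • ξ + (‖k‖ ^ 2)⁻¹ • k‖ ^ 2 = (‖ξ + k‖ / (‖ξ‖ * ‖k‖)) ^ 2 := by
    rw [div_pow, @norm_add_sq_real, @norm_add_sq_real, real_inner_smul_left,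
      real_inner_smul_right, norm_smul, norm_smul]
    simp only [norm_inv, norm_pow, Real.norm_eq_abs, abs_norm, mul_pow]
    field_simp
    ring
  have h1 : (0:ℝ) ≤ ‖(‖ξ‖ ^ 2)⁻¹ • ξ + (‖k‖ ^ 2)⁻¹ • k‖ := norm_nonneg _
  have h2 : (0:ℝ) ≤ ‖ξ + k‖ / (‖ξ‖ * ‖k‖) := by positivity
  nlinarith [hsq, h1, h2]

theorem projection_trig_inequality_one (k ξ : EuclideanSpace ℝ (Fin 3)) (hk : k ≠ 0)
    (hξ : ξ ≠ 0) (v : EuclideanSpace ℂ (Fin 3)) :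
    ‖(((‖ξ‖ : ℂ) ^ 2)⁻¹ * dotRC v ξ) • toC3 ξ + (((‖k‖ : ℂ) ^ 2)⁻¹ * dotRC v ξ) • toC3 k‖ ≤
      ‖v‖ * ‖ξ + k‖ / ‖k‖ := by
  have hk' : (0:ℝ) < ‖k‖ := norm_pos_iff.2 hk
  have hξ' : (0:ℝ) < ‖ξ‖ := norm_pos_iff.2 hξ
  have hfac :
      (((‖ξ‖ : ℂ) ^ 2)⁻¹ * dotRC v ξ) • toC3 ξ + (((‖k‖ : ℂ) ^ 2)⁻¹ * dotRC v ξ) • toC3 k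
        = dotRC v ξ • toC3 ((‖ξ‖ ^ 2)⁻¹ • ξ + (‖k‖ ^ 2)⁻¹ • k) := by
    rw [toC3_add, ← toC3_smul, ← toC3_smul, smul_add]
    push_cast
    rw [smul_smul, smul_smul]
    ring_nf
  rw [hfac, norm_smul, norm_toC3, norm_u k ξ hk hξ]
  calc ‖dotRC v ξ‖ * (‖ξ + k‖ / (‖ξ‖ * ‖k‖))
      ≤ (‖ξ‖ * ‖v‖) * (‖ξ + k‖ / (‖ξ‖ * ‖k‖)) := by
        apply mul_le_mul_of_nonneg_right (norm_dotRC_le v ξ)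
        positivity
    _ = ‖v‖ * ‖ξ + k‖ / ‖k‖ := by field_simp

end
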